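/- The infinite queue specification and the finite Bergstra–Klop queue specification define the same behaviour up to divergence-preserving branching bisimilarity: T_{E∞Q}(Q_ε) ≈Δb T_{EQ}(Q^{io}_l). -/

import Mathlib

namespace RTMPaper

/-! ## Labelled transition systems

An `A`-labelled transition system; transition labels are drawn from `Option A`,
where `none` plays the role of the unobservable action τ. -/

structure LTS (A : Type) where
  State : Type
  tr : State → Option A → State → Prop
  init : State
  final : Set State

namespace LTS

variable {A : Type}

/-- A τ-step. -/
def tauStep (T : LTS A) (s t : T.State) : Prop := T.tr s none t

/-- `⇒` : the reflexive–transitive closure of τ-steps. -/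
def tauReach (T : LTS A) : T.State → T.State → Prop :=
  Relation.ReflTransGen T.tauStep

/-- `s —(a)→ t` : either `s —a→ t`, or `a = τ` and `s = t`. -/
def optStep (T : LTS A) (s : T.State) (a : Option A) (t : T.State) : Prop :=
  T.tr s a t ∨ (a = none ∧ s = t)

/-- The set of outgoing transitions of a state. -/
def out (T : LTS A) (s : T.State) : Set (Option A × T.State) :=
  {p | T.tr s p.1 p.2}

def FinitelyBranching (T : LTS A) : Prop := ∀ s, (T.out s).Finite

/-- The branching degree of `T` is bounded by `B`. -/
def BranchingDegreeBoundedBy (T : LTS A) (B : ℕ) : Prop :=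
  ∀ s, (T.out s).Finite ∧ (T.out s).ncard ≤ B

def BoundedlyBranching (T : LTS A) : Prop := ∃ B, T.BranchingDegreeBoundedBy B

/-- A deterministic transition system. -/
def Deterministic (T : LTS A) : Prop :=
  (∀ s a t₁ t₂, T.tr s a t₁ → T.tr s a t₂ → t₁ = t₂) ∧
  (∀ s t, T.tr s none t → ∀ a u, T.tr s a u → a = none)

/-- Relabelling of an LTS along a map of action alphabets (τ is mapped to τ). -/
def relabel {A' : Type} (f : A → A') (T : LTS A) : LTS A' where
  State := T.State
  tr s a t := ∃ a₀ : Option A, T.tr s a₀ t ∧ a = Option.map f a₀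
  init := T.init
  final := T.final

end LTS

/-! ## (Divergence-preserving) branching bisimilarity -/

structure IsBranchingBisimulation {A : Type} (T₁ T₂ : LTS A)
    (R : T₁.State → T₂.State → Prop) : Prop where
  fwd : ∀ s₁ s₂ a s₁', R s₁ s₂ → T₁.tr s₁ a s₁' →
    ∃ s₂'' s₂', T₂.tauReach s₂ s₂'' ∧ T₂.optStep s₂'' a s₂' ∧ R s₁ s₂'' ∧ R s₁' s₂'
  bwd : ∀ s₁ s₂ a s₂', R s₁ s₂ → T₂.tr s₂ a s₂' →
    ∃ s₁'' s₁', T₁.tauReach s₁ s₁'' ∧ T₁.optStep s₁'' a s₁' ∧ R s₁'' s₂ ∧ R s₁' s₂'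
  finFwd : ∀ s₁ s₂, R s₁ s₂ → s₁ ∈ T₁.final →
    ∃ s₂', T₂.tauReach s₂ s₂' ∧ R s₁ s₂' ∧ s₂' ∈ T₂.final
  finBwd : ∀ s₁ s₂, R s₁ s₂ → s₂ ∈ T₂.final →
    ∃ s₁', T₁.tauReach s₁ s₁' ∧ R s₁' s₂ ∧ s₁' ∈ T₁.final

/-- The divergence-preservation conditions on a branching bisimulation. -/
def DivergencePreserving {A : Type} (T₁ T₂ : LTS A)
    (R : T₁.State → T₂.State → Prop) : Prop :=
  (∀ (s₂ : T₂.State) (f : ℕ → T₁.State),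
      (∀ i, T₁.tauStep (f i) (f (i + 1))) → (∀ i, R (f i) s₂) →
      ∃ s₂', Relation.TransGen T₂.tauStep s₂ s₂' ∧ ∃ i, R (f i) s₂') ∧
  (∀ (s₁ : T₁.State) (f : ℕ → T₂.State),
      (∀ i, T₂.tauStep (f i) (f (i + 1))) → (∀ i, R s₁ (f i)) →
      ∃ s₁', Relation.TransGen T₁.tauStep s₁ s₁' ∧ ∃ i, R s₁' (f i))

/-- `T₁ ≈b T₂` : branching bisimilarity. -/
def BranchingBisimilar {A : Type} (T₁ T₂ : LTS A) : Prop :=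
  ∃ R, IsBranchingBisimulation T₁ T₂ R ∧ R T₁.init T₂.init

/-- `T₁ ≈Δb T₂` : divergence-preserving branching bisimilarity. -/
def DPBranchingBisimilar {A : Type} (T₁ T₂ : LTS A) : Prop :=
  ∃ R, IsBranchingBisimulation T₁ T₂ R ∧ DivergencePreserving T₁ T₂ R ∧
    R T₁.init T₂.init

/-! ## Effective and computable transition systems -/

/-- A set of natural numbers is recursively enumerable. -/
def REset (X : Set ℕ) : Prop :=
  ∃ f : ℕ →. Unit, Partrec f ∧ ∀ n, (f n).Dom ↔ n ∈ X

/-- A (finitely branching) LTS is computable if, with respect to some injective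
codings of its labels and states into ℕ, the functions `out` and `fin` are
recursive. -/
def LTS.IsComputable {A : Type} (T : LTS A) : Prop :=
  ∃ hfb : ∀ s, (T.out s).Finite,
    ∃ (cL : Option A → ℕ) (cS : T.State → ℕ),
      Function.Injective cL ∧ Function.Injective cS ∧
      (∃ fo : ℕ → ℕ, Computable fo ∧ ∀ s,
        fo (cS s) =
          Encodable.encode
            (((hfb s).toFinset).image fun p => Nat.pair (cL p.1) (cS p.2))) ∧
      (∃ ff : ℕ → ℕ, Computable ff ∧ ∀ s,
        (s ∈ T.final → ff (cS s) = 1) ∧ (s ∉ T.final → ff (cS s) = 0))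

/-- A (finitely branching) LTS is effective if, with respect to some injective
codings of its labels and states into ℕ, its transition relation and its set of
final states are recursively enumerable. -/
def LTS.IsEffective {A : Type} (T : LTS A) : Prop :=
  T.FinitelyBranching ∧
  ∃ (cL : Option A → ℕ) (cS : T.State → ℕ),
    Function.Injective cL ∧ Function.Injective cS ∧
    REset {n | ∃ s a t, T.tr s a t ∧ n = Nat.pair (cS s) (Nat.pair (cL a) (cS t))} ∧
    REset {n | ∃ s ∈ T.final, n = cS s}

/-! ## Reactive Turing machines -/

inductive Move : Type
  | L | R
deriving DecidableEq

instance instFintypeMove : Fintype Move where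
  elems := {Move.L, Move.R}
  complete := by intro x; cases x <;> simp

/-- A tape instance: the content left of the head (nearest symbol first), the
symbol under the head, and the content right of the head (nearest symbol
first).  Tape symbols are `Option D`, with `none` the blank symbol □. -/
structure Tape (D : Type) where
  left : List (Option D)
  head : Option D
  right : List (Option D)

def Tape.empty (D : Type) : Tape D := ⟨[], none, []⟩

/-- Write `e` at the head position and move the head in direction `m`. -/
def Tape.writeMove {D : Type} (t : Tape D) (e : Option D) : Move → Tape D
  | .L =>
    match t.left with
    | [] => ⟨[], none, e :: t.right⟩
    | x :: l => ⟨l, x, e :: t.right⟩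
  | .R =>
    match t.right with
    | [] => ⟨e :: t.left, none, []⟩
    | x :: r => ⟨e :: t.left, x, r⟩

/-- A reactive Turing machine with action symbols `A` (labels `Option A`,
`none` being τ) and data symbols `D` (tape symbols `Option D`, `none` being
the blank symbol). -/
structure RTM (A D : Type) where
  Q : Type
  [instQ : Fintype Q]
  trans : Q → Option D → Option A → Option D → Move → Q → Prop
  init : Q
  final : Set Q

attribute [instance] RTM.instQ

/-- The transition system `T(M)` associated with an RTM `M`. -/
def RTM.lts {A D : Type} (M : RTM A D) : LTS A where
  State := M.Q × Tape D
  tr c a c' := ∃ e m, M.trans c.1 c.2.head a e m c'.1 ∧ c'.2 = c.2.writeMove e m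
  init := (M.init, Tape.empty D)
  final := {c | c.1 ∈ M.final}

def RTM.Deterministic {A D : Type} (M : RTM A D) : Prop :=
  (∀ s d a e₁ m₁ t₁ e₂ m₂ t₂, M.trans s d a e₁ m₁ t₁ → M.trans s d a e₂ m₂ t₂ →
      e₁ = e₂ ∧ m₁ = m₂ ∧ t₁ = t₂) ∧
  (∀ s d e₁ m₁ t₁, M.trans s d none e₁ m₁ t₁ →
      ∀ a e₂ m₂ t₂, M.trans s d a e₂ m₂ t₂ → a = none)

/-! ## Actions over channels, and parallel composition -/

/-- Actions over a set `C` of channels with communicated values in `V`,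
together with further (base) actions from `B`:  `recv c v` is `c?v`,
`send c v` is `c!v`. -/
inductive CAct (C V B : Type) : Type
  | recv : C → V → CAct C V B
  | send : C → V → CAct C V B
  | base : B → CAct C V B
deriving DecidableEq

/-- The (possibly silent) action `a` is a communication action on one of the
channels in `C'`. -/
def IsComm {C V B : Type} (C' : Set C) : Option (CAct C V B) → Prop
  | some (.recv c _) => c ∈ C'
  | some (.send c _) => c ∈ C'
  | _ => False

/-- Parallel composition `[T₁ ∥ T₂]_{C'}` of transition systems, enforcing
communication on the channels in `C'`. -/
def parLTS {C V B : Type} (C' : Set C) (T₁ T₂ : LTS (CAct C V B)) :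
    LTS (CAct C V B) where
  State := T₁.State × T₂.State
  init := (T₁.init, T₂.init)
  final := {p | p.1 ∈ T₁.final ∧ p.2 ∈ T₂.final}
  tr p a p' :=
    ¬ IsComm C' a ∧
    ((T₁.tr p.1 a p'.1 ∧ p.2 = p'.2) ∨
     (T₂.tr p.2 a p'.2 ∧ p.1 = p'.1) ∨
     (a = none ∧ ∃ c ∈ C', ∃ d : V,
        (T₁.tr p.1 (some (.send c d)) p'.1 ∧ T₂.tr p.2 (some (.recv c d)) p'.2) ∨
        (T₁.tr p.1 (some (.recv c d)) p'.1 ∧ T₂.tr p.2 (some (.send c d)) p'.2)))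

/-- The behaviour of `sender(M)`: output the symbols of `w` one by one along
channel `cu`, then halt in a final state. -/
def outputLTS {C V B : Type} (cu : C) (w : List V) : LTS (CAct C V B) where
  State := List V
  tr s a t := ∃ d, s = d :: t ∧ a = some (.send cu d)
  init := w
  final := {([] : List V)}

/-- A concrete (syntactic, Gödel-numberable) presentation of a reactive Turing
machine: states are `Fin (n+1)`, and the transition relation is a finite set of
tuples. -/
structure RTMc (A D : Type) where
  n : ℕ
  trans : Finset (Fin (n + 1) × Option D × Option A × Option D × Move × Fin (n + 1))
  init : Fin (n + 1)
  final : Finset (Fin (n + 1))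

def RTMc.toRTM {A D : Type} (M : RTMc A D) : RTM A D where
  Q := Fin (M.n + 1)
  trans s d a e m t := (s, d, a, e, m, t) ∈ M.trans
  init := M.init
  final := (↑M.final : Set (Fin (M.n + 1)))

end RTMPaper

namespace RTMPaper

/-! ## A process calculus (TCP_τ without sequential composition) -/

/-- Process expressions: deadlock `0`, skip `1`, action prefix, alternative
composition, parallel composition (enforcing communication on a set of
channels), and names. -/
inductive PExp (C V B N : Type) : Type
  | dl : PExp C V B N
  | emp : PExp C V B N
  | pref : Option (CAct C V B) → PExp C V B N → PExp C V B N
  | alt : PExp C V B N → PExp C V B N → PExp C V B N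
  | par : Set C → PExp C V B N → PExp C V B N → PExp C V B N
  | name : N → PExp C V B N

namespace PExp

def names {C V B N : Type} : PExp C V B N → Set N
  | .dl => ∅
  | .emp => ∅
  | .pref _ p => p.names
  | .alt p q => p.names ∪ q.names
  | .par _ p q => p.names ∪ q.names
  | .name n => {n}

def mapNames {C V B N N' : Type} (f : N → N') : PExp C V B N → PExp C V B N'
  | .dl => .dl
  | .emp => .emp
  | .pref a p => .pref a (p.mapNames f)
  | .alt p q => .alt (p.mapNames f) (q.mapNames f)
  | .par C' p q => .par C' (p.mapNames f) (q.mapNames f)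
  | .name n => .name (f n)

end PExp

/-- A recursive specification over the names `N` is a partial map from names to
process expressions (the defining equations). -/
def SpecWF {C V B N : Type} (E : N → Option (PExp C V B N)) : Prop :=
  ∀ n p, E n = some p → ∀ m ∈ PExp.names p, (E m).isSome

/-- All names occurring in `p` have a defining equation in `E`. -/
def DefinedIn {C V B N : Type} (E : N → Option (PExp C V B N))
    (p : PExp C V B N) : Prop :=
  ∀ m ∈ PExp.names p, (E m).isSome

/-- The termination predicate `↓` of the structural operational semantics. -/
inductive Term {C V B N : Type} (E : N → Option (PExp C V B N)) :
    PExp C V B N → Prop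
  | emp : Term E .emp
  | altL {p q} : Term E p → Term E (.alt p q)
  | altR {p q} : Term E q → Term E (.alt p q)
  | par {C' p q} : Term E p → Term E q → Term E (.par C' p q)
  | name {n p} : E n = some p → Term E p → Term E (.name n)

/-- The transition relation of the structural operational semantics. -/
inductive Step {C V B N : Type} (E : N → Option (PExp C V B N)) :
    PExp C V B N → Option (CAct C V B) → PExp C V B N → Prop
  | pref {a p} : Step E (.pref a p) a p
  | altL {p q a p'} : Step E p a p' → Step E (.alt p q) a p'
  | altR {p q a q'} : Step E q a q' → Step E (.alt p q) a q'
  | parL {C' p q a p'} : Step E p a p' → ¬ IsComm C' a →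
      Step E (.par C' p q) a (.par C' p' q)
  | parR {C' p q a q'} : Step E q a q' → ¬ IsComm C' a →
      Step E (.par C' p q) a (.par C' p q')
  | syncSR {C' : Set C} {p q p' q' c d} : c ∈ C' →
      Step E p (some (.send c d)) p' → Step E q (some (.recv c d)) q' →
      Step E (.par C' p q) none (.par C' p' q')
  | syncRS {C' : Set C} {p q p' q' c d} : c ∈ C' →
      Step E p (some (.recv c d)) p' → Step E q (some (.send c d)) q' →
      Step E (.par C' p q) none (.par C' p' q')
  | name {n p a p'} : E n = some p → Step E p a p' → Step E (.name n) a p'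

/-- The process expressions reachable from `p` under the semantics of `E`. -/
def Reach {C V B N : Type} (E : N → Option (PExp C V B N))
    (p : PExp C V B N) : Set (PExp C V B N) :=
  {q | Relation.ReflTransGen (fun x y => ∃ a, Step E x a y) p q}

/-- The transition system `T_E(p)` associated with the process expression `p`
and the recursive specification `E`. -/
def pLTS {C V B N : Type} (E : N → Option (PExp C V B N))
    (p : PExp C V B N) : LTS (CAct C V B) where
  State := {q // q ∈ Reach E p}
  tr s a t := Step E s.1 a t.1
  init := ⟨p, Relation.ReflTransGen.refl⟩
  final := {s | Term E s.1}

/-- A deterministic internal computation from `s` to `s'` with respect to a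
transition relation `tr`. -/
def DetInternalComp {S A : Type} (tr : S → Option A → S → Prop)
    (s s' : S) : Prop :=
  ∃ (n : ℕ) (f : ℕ → S), f 0 = s ∧ f n = s' ∧
    (∀ i < n, tr (f i) none (f (i + 1))) ∧
    (∀ i < n, ∀ a u, tr (f i) a u → a = none ∧ u = f (i + 1))

/-! ### Finite sums of process expressions -/

def bigAlt {C V B N : Type} (l : List (PExp C V B N)) : PExp C V B N :=
  l.foldr PExp.alt PExp.dl

/-- `Σ_{x ∈ l} f x`. -/
def sumList {C V B N ι : Type} (l : List ι) (f : ι → PExp C V B N) :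
    PExp C V B N :=
  bigAlt (l.map f)

/-- The list of all elements of a finite type. -/
noncomputable def allOf (ι : Type) [Fintype ι] : List ι := Finset.univ.toList

/-- The disjoint union of two recursive specifications. -/
def combineSpec {C V B N₁ N₂ : Type}
    (E₁ : N₁ → Option (PExp C V B N₁)) (E₂ : N₂ → Option (PExp C V B N₂)) :
    N₁ ⊕ N₂ → Option (PExp C V B (N₁ ⊕ N₂))
  | .inl n => (E₁ n).map (PExp.mapNames Sum.inl)
  | .inr n => (E₂ n).map (PExp.mapNames Sum.inr)

/-! ### Queue specifications -/

/-- The infinite specification `E∞Q` of a FIFO queue over the alphabet `al`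
with input channel `ci` and output channel `co`; the name of a state of the
queue is its contents (a string, insertion at the left, removal at the
right). -/
def infQueueSpec (C B V : Type) (al : List V) (ci co : C) :
    List V → Option (PExp C V B (List V)) := fun l =>
  some <|
    match l.getLast? with
    | none =>
        .alt (sumList al fun d => .pref (some (.recv ci d)) (.name [d])) .emp
    | some d =>
        .alt (.alt (.pref (some (.send co d)) (.name l.dropLast))
          (sumList al fun e => .pref (some (.recv ci e)) (.name (e :: l)))) .emp

/-- The finite Bergstra–Klop queue specification `EQ` (with added `1`-summands):
for channels `(j,k,p)`,
`Q^{jk}_p ≝ Σ_d j?d.[ Q^{jp}_k ∥ (1 + k!d.Q^{pk}_j) ]_{{p}} + 1`. -/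
def bkQueueSpec (C B V : Type) (al : List V) :
    C × C × C → Option (PExp C V B (C × C × C)) := fun jkp =>
  some <| .alt
    (sumList al fun d => .pref (some (.recv jkp.1 d))
      (.par {jkp.2.2} (.name (jkp.1, jkp.2.2, jkp.2.1))
        (.alt .emp (.pref (some (.send jkp.2.1 d)) (.name (jkp.2.2, jkp.2.1, jkp.1))))))
    .emp

/-! ### Tape specifications -/

/-- Symbols communicated in the tape/queue specifications: tape symbols
(`dat d` for `d ∈ D□`), the fresh symbols `⊥` and `$`, and the move
instructions `L` and `R`. -/
inductive Sym (D : Type) : Type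
  | dat : Option D → Sym D
  | bot : Sym D
  | dollar : Sym D
  | mvL : Sym D
  | mvR : Sym D
deriving DecidableEq

instance {D : Type} [Fintype D] [DecidableEq D] : Fintype (Sym D) where
  elems := ((Finset.univ : Finset (Option D)).image Sym.dat) ∪
    {Sym.bot, Sym.dollar, Sym.mvL, Sym.mvR}
  complete := by intro x; cases x <;> simp

/-- The queue alphabet `D□ ∪ {⊥, $}`. -/
noncomputable def qAlphList (D : Type) [Fintype D] [DecidableEq D] : List (Sym D) :=
  ((Finset.univ : Finset (Sym D)).filter fun v => v ≠ Sym.mvL ∧ v ≠ Sym.mvR).toList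

def dmap {D : Type} (l : List (Option D)) : List (Sym D) := l.map Sym.dat

def movSym {D : Type} : Move → Sym D
  | .L => .mvL
  | .R => .mvR

/-- Names of the finite tape-controller specification `ET`. -/
inductive TName (D : Type) : Type
  | H : Option D → TName D
  | HL : Option D → TName D
  | HR : Option D → TName D
  | Back : TName D
  | Fwd : Option D → TName D
  | FwdBot : TName D

/-- The finite tape-controller specification `ET`, with read channel `cr`,
write channel `cw`, move channel `cm`, and a queue interface on channels
`ci` (insert) and `co` (remove). -/
noncomputable def tapeCtrlSpec (C D B : Type) [Fintype D] (ci co cr cw cm : C) :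
    TName D → Option (PExp C (Sym D) B (TName D))
  | .H d => some <| .alt (.alt (.alt (.alt
      (.pref (some (.send cr (.dat d))) (.name (.H d)))
      (sumList (allOf (Option D)) fun e =>
        .pref (some (.recv cw (.dat e))) (.name (.H e))))
      (.pref (some (.recv cm .mvL)) (.name (.HL d))))
      (.pref (some (.recv cm .mvR)) (.name (.HR d))))
      .emp
  | .HL d => some <| .pref (some (.send ci (.dat d)))
      (.alt (sumList (allOf (Option D)) fun e =>
          .pref (some (.recv co (.dat e))) (.name (.H e)))
        (.pref (some (.recv co .bot))
          (.pref (some (.send ci .dollar))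
            (.pref (some (.send ci .bot)) (.name .Back)))))
  | .Back => some <| .alt
      (sumList (allOf (Option D)) fun d =>
        .pref (some (.recv co (.dat d)))
          (.pref (some (.send ci (.dat d))) (.name .Back)))
      (.pref (some (.recv co .dollar)) (.name (.H none)))
  | .HR d => some <| .pref (some (.send ci .dollar))
      (.pref (some (.send ci (.dat d)))
        (.alt (sumList (allOf (Option D)) fun e =>
            .pref (some (.recv co (.dat e))) (.name (.Fwd e)))
          (.pref (some (.recv co .bot)) (.name .FwdBot))))
  | .Fwd d => some <| .alt (.alt
      (sumList (allOf (Option D)) fun e =>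
        .pref (some (.recv co (.dat e)))
          (.pref (some (.send ci (.dat d))) (.name (.Fwd e))))
      (.pref (some (.recv co .bot))
        (.pref (some (.send ci (.dat d))) (.name .FwdBot))))
      (.pref (some (.recv co .dollar)) (.name (.H d)))
  | .FwdBot => some <| .alt
      (sumList (allOf (Option D)) fun e =>
        .pref (some (.recv co (.dat e)))
          (.pref (some (.send ci .bot)) (.name (.Fwd e))))
      (.pref (some (.recv co .dollar))
        (.pref (some (.send ci .bot)) (.name (.H none))))

/-- The infinite tape specification `E∞T`: one name for every tape instance,
with read channel `cr`, write channel `cw` and move channel `cm`. -/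
noncomputable def infTapeSpec (C B D : Type) [Fintype D] (cr cw cm : C) :
    Tape D → Option (PExp C (Sym D) B (Tape D)) := fun t =>
  some <| .alt (.alt (.alt (.alt
    (.pref (some (.send cr (.dat t.head))) (.name t))
    (sumList (allOf (Option D)) fun e =>
      .pref (some (.recv cw (.dat e))) (.name ⟨t.left, e, t.right⟩)))
    (.pref (some (.recv cm .mvL)) (.name (t.writeMove t.head .L))))
    (.pref (some (.recv cm .mvR)) (.name (t.writeMove t.head .R))))
    .emp

/-- The finite-control specification `Efc` of an RTM `M`:
`C_{s,d} ≝ Σ_{(s,d,a,e,Mv,t) ∈ →} a.w!e.m!Mv.Σ_{f∈D□} r?f.C_{t,f}`,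
with an additional summand `1` iff `s` is a final state of `M`. -/
noncomputable def fcSpec {C D B : Type} [Fintype D] [Fintype B]
    (M : RTM B D) (cr cw cm : C) :
    M.Q × Option D → Option (PExp C (Sym D) B (M.Q × Option D)) := fun sd =>
  let base : PExp C (Sym D) B (M.Q × Option D) :=
    bigAlt ((((Set.toFinite {x : Option B × Option D × Move × M.Q |
        M.trans sd.1 sd.2 x.1 x.2.1 x.2.2.1 x.2.2.2}).toFinset).toList).map fun x =>
      .pref (Option.map CAct.base x.1)
        (.pref (some (.send cw (.dat x.2.1)))
          (.pref (some (.send cm (movSym x.2.2.1)))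
            (sumList (allOf (Option D)) fun f =>
              .pref (some (.recv cr (.dat f))) (.name (x.2.2.2, f))))))
  haveI := Classical.propDecidable (sd.1 ∈ M.final)
  some (if sd.1 ∈ M.final then .alt base .emp else base)

end RTMPaper

/-! The reachable states of the Bergstra–Klop queue are nested parallel compositions, abstracted
as trees (`QShape`): the steps of a tree's process expression are exactly an input at the
innermost buffer, an output from the outermost ready buffer, and internal hand-overs of an element
from an inner to an outer component. Hand-overs preserve the contents, and the oldest element can
always be handed over to the output, so relating `Q_σ` to every tree with contents `σ` is a
branching bisimulation. Neither side diverges: `E∞Q` has no internal steps, and a hand-over fixes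
the sum over leaves of `2 ^ (number of elements to the left)` while creating a leaf. The
bisimulation on all expressions restricts to the reachable parts. -/

namespace RTMPaper

section BoundedMorphism

variable {A : Type}

structure LTS.IsBoundedMorphism (T' T : LTS A) (π : T'.State → T.State) : Prop where
  map_tr : ∀ {s a t}, T'.tr s a t → T.tr (π s) a (π t)
  lift_tr : ∀ {s a q}, T.tr (π s) a q → ∃ t, T'.tr s a t ∧ π t = q
  mem_final_iff : ∀ s, π s ∈ T.final ↔ s ∈ T'.final
  map_init : π T'.init = T.init

namespace LTS.IsBoundedMorphism

variable {T' T : LTS A} {π : T'.State → T.State}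

lemma lift_tauReach (hπ : T'.IsBoundedMorphism T π) {s : T'.State} {q : T.State}
    (h : T.tauReach (π s) q) : ∃ t, T'.tauReach s t ∧ π t = q := by
  induction h with
  | refl => exact ⟨s, .refl, rfl⟩
  | tail _ hstep ih =>
    obtain ⟨t, hst, rfl⟩ := ih
    obtain ⟨t', htt', rfl⟩ := hπ.lift_tr hstep
    exact ⟨t', hst.tail htt', rfl⟩

lemma lift_transGen_tauStep (hπ : T'.IsBoundedMorphism T π) {s : T'.State} {q : T.State}
    (h : Relation.TransGen T.tauStep (π s) q) :
    ∃ t, Relation.TransGen T'.tauStep s t ∧ π t = q := by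
  induction h with
  | single hstep =>
    obtain ⟨t, hst, rfl⟩ := hπ.lift_tr hstep
    exact ⟨t, .single hst, rfl⟩
  | tail _ hstep ih =>
    obtain ⟨t, hst, rfl⟩ := ih
    obtain ⟨t', htt', rfl⟩ := hπ.lift_tr hstep
    exact ⟨t', hst.tail htt', rfl⟩

lemma lift_optStep (hπ : T'.IsBoundedMorphism T π) {s : T'.State} {a : Option A}
    {q : T.State} (h : T.optStep (π s) a q) : ∃ t, T'.optStep s a t ∧ π t = q := by
  rcases h with hstep | ⟨rfl, rfl⟩
  · obtain ⟨t, hst, rfl⟩ := hπ.lift_tr hstep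
    exact ⟨t, .inl hst, rfl⟩
  · exact ⟨s, .inr ⟨rfl, rfl⟩, rfl⟩

end LTS.IsBoundedMorphism

variable {T₁' T₁ T₂' T₂ : LTS A} {π₁ : T₁'.State → T₁.State} {π₂ : T₂'.State → T₂.State}
  {R : T₁.State → T₂.State → Prop}

lemma IsBranchingBisimulation.comap (h₁ : T₁'.IsBoundedMorphism T₁ π₁)
    (h₂ : T₂'.IsBoundedMorphism T₂ π₂) (hR : IsBranchingBisimulation T₁ T₂ R) :
    IsBranchingBisimulation T₁' T₂' fun s₁ s₂ => R (π₁ s₁) (π₂ s₂) where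
  fwd s₁ s₂ a s₁' hs hstep := by
    obtain ⟨q'', q', hreach, hopt, hR'', hR'⟩ := hR.fwd _ _ _ _ hs (h₁.map_tr hstep)
    obtain ⟨s₂'', hreach', rfl⟩ := h₂.lift_tauReach hreach
    obtain ⟨s₂', hopt', rfl⟩ := h₂.lift_optStep hopt
    exact ⟨s₂'', s₂', hreach', hopt', hR'', hR'⟩
  bwd s₁ s₂ a s₂' hs hstep := by
    obtain ⟨q'', q', hreach, hopt, hR'', hR'⟩ := hR.bwd _ _ _ _ hs (h₂.map_tr hstep)
    obtain ⟨s₁'', hreach', rfl⟩ := h₁.lift_tauReach hreach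
    obtain ⟨s₁', hopt', rfl⟩ := h₁.lift_optStep hopt
    exact ⟨s₁'', s₁', hreach', hopt', hR'', hR'⟩
  finFwd s₁ s₂ hs hfin := by
    obtain ⟨q, hreach, hRq, hq⟩ := hR.finFwd _ _ hs ((h₁.mem_final_iff s₁).2 hfin)
    obtain ⟨s₂', hreach', rfl⟩ := h₂.lift_tauReach hreach
    exact ⟨s₂', hreach', hRq, (h₂.mem_final_iff s₂').1 hq⟩
  finBwd s₁ s₂ hs hfin := by
    obtain ⟨q, hreach, hRq, hq⟩ := hR.finBwd _ _ hs ((h₂.mem_final_iff s₂).2 hfin)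
    obtain ⟨s₁', hreach', rfl⟩ := h₁.lift_tauReach hreach
    exact ⟨s₁', hreach', hRq, (h₁.mem_final_iff s₁').1 hq⟩

lemma DivergencePreserving.comap (h₁ : T₁'.IsBoundedMorphism T₁ π₁)
    (h₂ : T₂'.IsBoundedMorphism T₂ π₂) (hR : DivergencePreserving T₁ T₂ R) :
    DivergencePreserving T₁' T₂' fun s₁ s₂ => R (π₁ s₁) (π₂ s₂) := by
  constructor
  · intro s₂ f hf hRf
    obtain ⟨q, hq, i, hRq⟩ := hR.1 _ (π₁ ∘ f) (fun i => h₁.map_tr (hf i)) hRf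
    obtain ⟨s₂', hs₂', rfl⟩ := h₂.lift_transGen_tauStep hq
    exact ⟨s₂', hs₂', i, hRq⟩
  · intro s₁ f hf hRf
    obtain ⟨q, hq, i, hRq⟩ := hR.2 _ (π₂ ∘ f) (fun i => h₂.map_tr (hf i)) hRf
    obtain ⟨s₁', hs₁', rfl⟩ := h₁.lift_transGen_tauStep hq
    exact ⟨s₁', hs₁', i, hRq⟩

lemma DPBranchingBisimilar.comap (h₁ : T₁'.IsBoundedMorphism T₁ π₁)
    (h₂ : T₂'.IsBoundedMorphism T₂ π₂) (h : DPBranchingBisimilar T₁ T₂) :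
    DPBranchingBisimilar T₁' T₂' := by
  obtain ⟨R, hbisim, hdiv, hinit⟩ := h
  refine ⟨_, hbisim.comap h₁ h₂, hdiv.comap h₁ h₂, ?_⟩
  rwa [h₁.map_init, h₂.map_init]

end BoundedMorphism

section Expressions

variable {C V B N : Type} {E : N → Option (PExp C V B N)}

/-- `pLTS E p` is the part of `exprLTS E p` reachable from `p`. -/
def exprLTS (E : N → Option (PExp C V B N)) (p : PExp C V B N) : LTS (CAct C V B) where
  State := PExp C V B N
  tr := Step E
  init := p
  final := {q | Term E q}

lemma pLTS_isBoundedMorphism (p : PExp C V B N) :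
    (pLTS E p).IsBoundedMorphism (exprLTS E p) Subtype.val where
  map_tr h := h
  lift_tr {s a q} h := ⟨⟨q, s.2.tail ⟨a, h⟩⟩, h, rfl⟩
  mem_final_iff _ := Iff.rfl
  map_init := rfl

lemma step_sumList_iff {ι : Type} {l : List ι} {f : ι → PExp C V B N}
    {a : Option (CAct C V B)} {q : PExp C V B N} :
    Step E (sumList l f) a q ↔ ∃ x ∈ l, Step E (f x) a q := by
  induction l with
  | nil =>
    simp only [List.not_mem_nil, false_and, exists_false, iff_false]
    rintro ⟨⟩
  | cons x l ih =>
    change Step E (.alt (f x) (sumList l f)) a q ↔ _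
    constructor
    · intro h
      cases h with
      | altL h => exact ⟨x, List.mem_cons_self, h⟩
      | altR h =>
        obtain ⟨y, hy, h⟩ := ih.1 h
        exact ⟨y, List.mem_cons_of_mem x hy, h⟩
    · rintro ⟨y, hy, h⟩
      rcases List.mem_cons.1 hy with rfl | hy
      · exact .altL h
      · exact .altR (ih.2 ⟨y, hy, h⟩)

end Expressions

section InfiniteQueue

variable {C B V : Type} {al : List V} {ci co : C}

lemma step_infQueueSpec_name_iff {σ : List V} {a : Option (CAct C V B)}
    {q : PExp C V B (List V)} :
    Step (infQueueSpec C B V al ci co) (.name σ) a q ↔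
      (∃ d ∈ al, a = some (.recv ci d) ∧ q = .name (d :: σ)) ∨
      (∃ d, σ.getLast? = some d ∧ a = some (.send co d) ∧ q = .name σ.dropLast) := by
  constructor
  · intro h
    cases h with | name hE hs =>
    cases Option.some.inj hE
    split at hs
    · rename_i hσ
      obtain rfl := List.getLast?_eq_none_iff.1 hσ
      cases hs with
      | altL h =>
        obtain ⟨d, hd, h⟩ := step_sumList_iff.1 h
        cases h
        exact .inl ⟨d, hd, rfl, rfl⟩
      | altR h => cases h
    · rename_i d hσ
      cases hs with
      | altL h =>
        cases h with
        | altL h =>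
          cases h
          exact .inr ⟨d, hσ, rfl, rfl⟩
        | altR h =>
          obtain ⟨e, he, h⟩ := step_sumList_iff.1 h
          cases h
          exact .inl ⟨e, he, rfl, rfl⟩
      | altR h => cases h
  · rintro (⟨d, hd, rfl, rfl⟩ | ⟨d, hσ, rfl, rfl⟩)
    · refine .name rfl ?_
      split
      · rename_i hσ
        obtain rfl := List.getLast?_eq_none_iff.1 hσ
        exact .altL (step_sumList_iff.2 ⟨d, hd, .pref⟩)
      · exact .altL (.altR (step_sumList_iff.2 ⟨d, hd, .pref⟩))
    · refine .name rfl ?_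
      simp only [hσ]
      exact .altL (.altL .pref)

lemma term_infQueueSpec_name (σ : List V) : Term (infQueueSpec C B V al ci co) (.name σ) :=
  .name rfl (by split <;> exact .altR .emp)

end InfiniteQueue

/-- The reachable states of the Bergstra–Klop queue, forgetting channel names: `leaf` is a name
`Q^{jk}_p`, `buf L d` is `[L ∥ (1 + k!d.Q^{pk}_j)]_{p}` and `par L U` is `[L ∥ U]_{p}`. -/
inductive QShape (V : Type) : Type
  | leaf : QShape V
  | buf : QShape V → V → QShape V
  | par : QShape V → QShape V → QShape V

namespace QShape

variable {V : Type}

/-- The queue contents, newest element first. -/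
def contents : QShape V → List V
  | leaf => []
  | buf L d => L.contents ++ [d]
  | par L U => L.contents ++ U.contents

def push : QShape V → V → QShape V
  | leaf, d => buf leaf d
  | buf L e, d => buf (L.push d) e
  | par L U, d => par (L.push d) U

def ready : QShape V → Option V
  | leaf => none
  | buf _ d => some d
  | par _ U => U.ready

def pop : QShape V → QShape V
  | leaf => leaf
  | buf L _ => par L leaf
  | par L U => par L (U.pop)

inductive TauStep : QShape V → QShape V → Prop
  | comm {L U : QShape V} {d : V} : L.ready = some d → TauStep (par L U) (par L.pop (U.push d))
  | buf {L L' : QShape V} {d : V} : TauStep L L' → TauStep (buf L d) (buf L' d)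
  | parL {L L' U : QShape V} : TauStep L L' → TauStep (par L U) (par L' U)
  | parR {L U U' : QShape V} : TauStep U U' → TauStep (par L U) (par L U')

@[simp]
lemma contents_push (t : QShape V) (d : V) : (t.push d).contents = d :: t.contents := by
  induction t with
  | leaf => rfl
  | buf L e ih => simp [push, contents, ih]
  | par L U ih => simp [push, contents, ih]

lemma contents_eq_of_ready_eq_some {t : QShape V} {d : V} (h : t.ready = some d) :
    t.contents = t.pop.contents ++ [d] := by
  induction t with
  | leaf => cases h
  | buf L e => cases h; simp [pop, contents]
  | par L U _ ih => simp [pop, contents, ih h]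

lemma TauStep.contents_eq {t t' : QShape V} (h : TauStep t t') : t'.contents = t.contents := by
  induction h with
  | comm hL => simp [contents, contents_eq_of_ready_eq_some hL]
  | buf _ ih | parL _ ih | parR _ ih => simp [contents, ih]

lemma contents_eq_of_reflTransGen {t t' : QShape V} (h : Relation.ReflTransGen TauStep t t') :
    t'.contents = t.contents := by
  induction h with
  | refl => rfl
  | tail _ hstep ih => rw [hstep.contents_eq, ih]

def leafCount : QShape V → ℕ
  | leaf => 1
  | buf L _ => L.leafCount
  | par L U => L.leafCount + U.leafCount

/-- Each leaf weighs `2 ^ k`, where `k` is the number of queue elements stored to its left. -/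
def weight : QShape V → ℕ
  | leaf => 1
  | buf L _ => L.weight
  | par L U => L.weight + 2 ^ L.contents.length * U.weight

lemma leafCount_le_weight (t : QShape V) : t.leafCount ≤ t.weight := by
  induction t with
  | leaf => rfl
  | buf L _ ih => exact ih
  | par L U ihL ihU =>
    exact Nat.add_le_add ihL (ihU.trans (Nat.le_mul_of_pos_left _ (Nat.two_pow_pos _)))

lemma weight_push (t : QShape V) (d : V) : (t.push d).weight + 1 = 2 * t.weight := by
  induction t with
  | leaf => rfl
  | buf L e ih => exact ih
  | par L U ih =>
    simp only [push, weight, contents_push, List.length_cons, pow_succ]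
    linarith

lemma weight_pop {t : QShape V} {d : V} (h : t.ready = some d) :
    t.pop.weight = t.weight + 2 ^ t.pop.contents.length := by
  induction t with
  | leaf => cases h
  | buf L e => simp [pop, weight, contents]
  | par L U _ ih =>
    simp only [pop, weight, contents, List.length_append, pow_add, ih h]
    ring

lemma leafCount_push (t : QShape V) (d : V) : (t.push d).leafCount = t.leafCount := by
  induction t with
  | leaf => rfl
  | buf L e ih => exact ih
  | par L U ih => simp [push, leafCount, ih]

lemma leafCount_pop {t : QShape V} {d : V} (h : t.ready = some d) :
    t.pop.leafCount = t.leafCount + 1 := by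
  induction t with
  | leaf => cases h
  | buf L e => rfl
  | par L U _ ih => simp only [pop, leafCount, ih h]; ring

lemma TauStep.weight_eq {t t' : QShape V} (h : TauStep t t') : t'.weight = t.weight := by
  induction h with
  | @comm L U d hL =>
    have hlen := congrArg List.length (contents_eq_of_ready_eq_some hL)
    simp only [List.length_append, List.length_singleton] at hlen
    simp only [weight, hlen, weight_pop hL, pow_succ]
    rw [mul_assoc, ← weight_push U d]
    ring
  | buf _ ih => exact ih
  | parL h ih => simp only [weight, ih, h.contents_eq]
  | parR _ ih => simp only [weight, ih]

lemma TauStep.leafCount_eq {t t' : QShape V} (h : TauStep t t') :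
    t'.leafCount = t.leafCount + 1 := by
  induction h with
  | comm hL => simp only [leafCount, leafCount_pop hL, leafCount_push]; ring
  | buf _ ih => exact ih
  | parL _ ih | parR _ ih => simp only [leafCount, ih]; ring

/-- Internal steps terminate: the weight is invariant while the number of leaves, which is bounded
by the weight, increases. -/
lemma not_forall_tauStep (f : ℕ → QShape V) : ¬ ∀ i, TauStep (f i) (f (i + 1)) := by
  intro hf
  have hcount : ∀ i, (f i).leafCount = (f 0).leafCount + i ∧ (f i).weight = (f 0).weight := by
    intro i
    induction i with
    | zero => simp
    | succ i ih => rw [(hf i).leafCount_eq, (hf i).weight_eq, ih.1, ih.2]; omega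
  have hle := leafCount_le_weight (f ((f 0).weight + 1))
  obtain ⟨hleaves, hweight⟩ := hcount ((f 0).weight + 1)
  omega

lemma TauStep.reflTransGen_parL {L L' : QShape V} (U : QShape V)
    (h : Relation.ReflTransGen TauStep L L') :
    Relation.ReflTransGen TauStep (par L U) (par L' U) :=
  h.lift (par · U) fun _ _ => TauStep.parL

lemma TauStep.reflTransGen_parR (L : QShape V) {U U' : QShape V}
    (h : Relation.ReflTransGen TauStep U U') :
    Relation.ReflTransGen TauStep (par L U) (par L U') :=
  h.lift (par L) fun _ _ => TauStep.parR

lemma exists_ready_push_of_contents_eq_nil {t : QShape V} (ht : t.contents = []) (d : V) :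
    ∃ t', Relation.ReflTransGen TauStep (t.push d) t' ∧ t'.ready = some d := by
  induction t with
  | leaf => exact ⟨buf leaf d, .refl, rfl⟩
  | buf L e => simp [contents] at ht
  | par L U ihL ihU =>
    simp only [contents, List.append_eq_nil_iff] at ht
    obtain ⟨L', hL, hL'⟩ := ihL ht.1
    obtain ⟨U', hU, hU'⟩ := ihU ht.2
    exact ⟨par L'.pop U', (TauStep.reflTransGen_parL U hL).trans
      (.head (.comm hL') (TauStep.reflTransGen_parR _ hU)), hU'⟩

lemma exists_ready_of_getLast? {t : QShape V} {d : V} (ht : t.contents.getLast? = some d) :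
    ∃ t', Relation.ReflTransGen TauStep t t' ∧ t'.ready = some d := by
  induction t with
  | leaf => cases ht
  | buf L e => cases ht.symm.trans (List.getLast?_concat ..); exact ⟨_, .refl, rfl⟩
  | par L U ihL ihU =>
    rcases eq_or_ne U.contents [] with hU | hU
    · simp only [contents, hU, List.append_nil] at ht
      obtain ⟨L', hL, hL'⟩ := ihL ht
      obtain ⟨U', hU, hU'⟩ := exists_ready_push_of_contents_eq_nil hU d
      exact ⟨par L'.pop U', (TauStep.reflTransGen_parL U hL).trans
        (.head (.comm hL') (TauStep.reflTransGen_parR _ hU)), hU'⟩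
    · rw [contents, List.getLast?_append_of_ne_nil _ hU] at ht
      obtain ⟨U', hU, hU'⟩ := ihU ht
      exact ⟨par L U', TauStep.reflTransGen_parR L hU, hU'⟩

end QShape

section BergstraKlop

variable {C B V : Type} {al : List V}

def ChannelsDistinct (w : C × C × C) : Prop := w.1 ≠ w.2.1 ∧ w.1 ≠ w.2.2 ∧ w.2.1 ≠ w.2.2

lemma ChannelsDistinct.inner {w : C × C × C} (hw : ChannelsDistinct w) :
    ChannelsDistinct (w.1, w.2.2, w.2.1) :=
  ⟨hw.2.1, hw.1, hw.2.2.symm⟩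

lemma ChannelsDistinct.outer {w : C × C × C} (hw : ChannelsDistinct w) :
    ChannelsDistinct (w.2.2, w.2.1, w.1) :=
  ⟨hw.2.2.symm, hw.2.1.symm, hw.1.symm⟩

namespace QShape

/-- The process expression of a shape whose outermost name is `Q^{jk}_p` for `w = (j, k, p)`;
components rotate the channels exactly as the equations of `bkQueueSpec` do. -/
def toPExp (B : Type) : QShape V → C × C × C → PExp C V B (C × C × C)
  | leaf, w => .name w
  | buf L d, w => .par {w.2.2} (L.toPExp B (w.1, w.2.2, w.2.1))
      (.alt .emp (.pref (some (.send w.2.1 d)) (.name (w.2.2, w.2.1, w.1))))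
  | par L U, w => .par {w.2.2} (L.toPExp B (w.1, w.2.2, w.2.1)) (U.toPExp B (w.2.2, w.2.1, w.1))

lemma toPExp_injective {t t' : QShape V} {w : C × C × C}
    (h : t.toPExp B w = t'.toPExp B w) : t = t' := by
  induction t generalizing t' w with
  | leaf => cases t' <;> simp_all [toPExp]
  | buf L d ih =>
    cases t' <;> simp only [toPExp, reduceCtorEq, PExp.par.injEq, PExp.alt.injEq,
      PExp.pref.injEq, Option.some.injEq, CAct.send.injEq, true_and, and_true] at h
    · rw [ih h.1, h.2]
    · rename_i U'
      cases U' <;> cases h.2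
  | par L U ihL ihU =>
    cases t' <;> simp only [toPExp, reduceCtorEq, PExp.par.injEq, true_and] at h
    · cases U <;> cases h.2
    · rw [ihL h.1, ihU h.2]

inductive LStep (al : List V) (w : C × C × C) : QShape V → Option (CAct C V B) → QShape V → Prop
  | push {t : QShape V} {d : V} : d ∈ al → LStep al w t (some (.recv w.1 d)) (t.push d)
  | pop {t : QShape V} {d : V} : t.ready = some d → LStep al w t (some (.send w.2.1 d)) t.pop
  | tau {t t' : QShape V} : TauStep t t' → LStep al w t none t'

variable {w : C × C × C}

lemma step_toPExp_push {d : V} (hd : d ∈ al) (t : QShape V) (hw : ChannelsDistinct w) :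
    Step (bkQueueSpec C B V al) (t.toPExp B w) (some (.recv w.1 d)) ((t.push d).toPExp B w) := by
  induction t generalizing w with
  | leaf => exact .name rfl (.altL (step_sumList_iff.2 ⟨d, hd, .pref⟩))
  | buf L e ih | par L U ih _ => exact .parL (ih hw.inner) hw.2.1

lemma step_toPExp_pop {t : QShape V} {d : V} (ht : t.ready = some d) (hw : ChannelsDistinct w) :
    Step (bkQueueSpec C B V al) (t.toPExp B w) (some (.send w.2.1 d)) (t.pop.toPExp B w) := by
  induction t generalizing w with
  | leaf => cases ht
  | buf L e => cases ht; exact .parR (.altR .pref) hw.2.2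
  | par L U _ ih => exact .parR (ih ht hw.outer) hw.2.2

lemma TauStep.step_toPExp (hal : ∀ d, d ∈ al) {t t' : QShape V} (h : TauStep t t')
    (hw : ChannelsDistinct w) :
    Step (bkQueueSpec C B V al) (t.toPExp B w) none (t'.toPExp B w) := by
  induction h generalizing w with
  | comm hL =>
    exact .syncSR rfl (step_toPExp_pop hL hw.inner) (step_toPExp_push (hal _) _ hw.outer)
  | buf _ ih | parL _ ih => exact .parL (ih hw.inner) id
  | parR _ ih => exact .parR (ih hw.outer) id

lemma term_toPExp (t : QShape V) (w : C × C × C) : Term (bkQueueSpec C B V al) (t.toPExp B w) := by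
  induction t generalizing w with
  | leaf => exact .name rfl (.altR .emp)
  | buf L _ ih => exact .par (ih _) (.altL .emp)
  | par L U ihL ihU => exact .par (ihL _) (ihU _)

def StepComplete (al : List V) (B : Type) (t : QShape V) : Prop :=
  ∀ ⦃w : C × C × C⦄ ⦃a : Option (CAct C V B)⦄ ⦃q : PExp C V B (C × C × C)⦄, ChannelsDistinct w →
    Step (bkQueueSpec C B V al) (t.toPExp B w) a q → ∃ t', LStep al w t a t' ∧ q = t'.toPExp B w

lemma stepComplete_leaf : StepComplete (C := C) al B (leaf : QShape V) := by
  intro w a q _ h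
  cases h with
  | name hE hs =>
    cases Option.some.inj hE
    cases hs with
    | altL h =>
      obtain ⟨d, hd, h⟩ := step_sumList_iff.1 h
      cases h
      exact ⟨_, .push hd, rfl⟩
    | altR h => cases h

lemma StepComplete.buf {L : QShape V} (hL : StepComplete (C := C) al B L) (e : V) :
    StepComplete (C := C) al B (buf L e) := by
  intro w a q hw h
  cases h with
  | parL hs hc =>
    obtain ⟨L', hL, rfl⟩ := hL hw.inner hs
    cases hL with
    | push hd => exact ⟨_, .push hd, rfl⟩
    | pop _ => exact absurd rfl hc
    | tau hT => exact ⟨_, .tau hT.buf, rfl⟩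
  | parR hs hc =>
    cases hs with
    | altL h => cases h
    | altR h => cases h; exact ⟨_, .pop rfl, rfl⟩
  | syncSR _ _ hr => cases hr with
    | altL h => cases h
    | altR h => cases h
  | syncRS hc hl _ =>
    obtain ⟨L', hL, rfl⟩ := hL hw.inner hl
    cases hL
    exact absurd hc hw.2.1

lemma StepComplete.par {L U : QShape V} (hL : StepComplete (C := C) al B L)
    (hU : StepComplete (C := C) al B U) : StepComplete (C := C) al B (par L U) := by
  intro w a q hw h
  cases h with
  | parL hs hc =>
    obtain ⟨L', hL, rfl⟩ := hL hw.inner hs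
    cases hL with
    | push hd => exact ⟨_, .push hd, rfl⟩
    | pop _ => exact absurd rfl hc
    | tau hT => exact ⟨_, .tau hT.parL, rfl⟩
  | parR hs hc =>
    obtain ⟨U', hU, rfl⟩ := hU hw.outer hs
    cases hU with
    | push hd => exact absurd rfl hc
    | pop hU => exact ⟨_, .pop hU, rfl⟩
    | tau hT => exact ⟨_, .tau hT.parR, rfl⟩
  | syncSR _ hl hr =>
    obtain ⟨L', hL, rfl⟩ := hL hw.inner hl
    obtain ⟨U', hU, rfl⟩ := hU hw.outer hr
    cases hL with | pop hL =>
    cases hU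
    exact ⟨_, .tau (.comm hL), rfl⟩
  | syncRS hc hl _ =>
    obtain ⟨L', hL, rfl⟩ := hL hw.inner hl
    cases hL
    exact absurd hc hw.2.1

lemma stepComplete (t : QShape V) : StepComplete (C := C) al B t := by
  induction t with
  | leaf => exact stepComplete_leaf
  | buf L e ih => exact ih.buf e
  | par L U ihL ihU => exact ihL.par ihU

lemma tauReach_toPExp (hal : ∀ d, d ∈ al) (hw : ChannelsDistinct w)
    (p : PExp C V B (C × C × C)) {t t' : QShape V} (h : Relation.ReflTransGen TauStep t t') :
    (exprLTS (bkQueueSpec C B V al) p).tauReach (t.toPExp B w) (t'.toPExp B w) :=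
  Relation.ReflTransGen.lift (toPExp B · w) (fun _ _ h => h.step_toPExp hal hw) _ _ h

lemma tauStep_of_step_toPExp {t t' : QShape V} (hw : ChannelsDistinct w)
    (h : Step (bkQueueSpec C B V al) (t.toPExp B w) none (t'.toPExp B w)) : TauStep t t' := by
  obtain ⟨t'', hstep, heq⟩ := stepComplete t hw h
  cases toPExp_injective heq
  cases hstep with
  | tau h => exact h

end QShape

end BergstraKlop

section Bisimulation

variable {C B V : Type} {al : List V} {w : C × C × C}

open QShape

def queueRel (B : Type) (w : C × C × C) (q : PExp C V B (List V))
    (s : PExp C V B (C × C × C)) : Prop :=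
  ∃ t : QShape V, q = .name t.contents ∧ s = t.toPExp B w

lemma isBranchingBisimulation_queueRel (hal : ∀ d, d ∈ al) (hw : ChannelsDistinct w)
    (p₁ : PExp C V B (List V)) (p₂ : PExp C V B (C × C × C)) :
    IsBranchingBisimulation (exprLTS (infQueueSpec C B V al w.1 w.2.1) p₁)
      (exprLTS (bkQueueSpec C B V al) p₂) (queueRel B w) where
  fwd := by
    rintro _ _ a q ⟨t, rfl, rfl⟩ h
    rcases step_infQueueSpec_name_iff.1 h with ⟨d, hd, rfl, rfl⟩ | ⟨d, hlast, rfl, rfl⟩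
    · exact ⟨_, _, .refl, .inl (step_toPExp_push hd t hw), ⟨t, rfl, rfl⟩,
        ⟨t.push d, by rw [contents_push], rfl⟩⟩
    · obtain ⟨t', hreach, hready⟩ := exists_ready_of_getLast? hlast
      have hcont := contents_eq_of_reflTransGen hreach
      refine ⟨_, _, tauReach_toPExp hal hw p₂ hreach, .inl (step_toPExp_pop hready hw),
        ⟨t', by rw [hcont], rfl⟩, ⟨t'.pop, ?_, rfl⟩⟩
      rw [← hcont, contents_eq_of_ready_eq_some hready, List.dropLast_concat]
  bwd := by
    rintro _ _ a s ⟨t, rfl, rfl⟩ h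
    obtain ⟨t', hstep, rfl⟩ := stepComplete t hw h
    cases hstep with
    | @push d hd =>
      exact ⟨_, _, .refl, .inl (step_infQueueSpec_name_iff.2 (.inl ⟨d, hd, rfl, rfl⟩)),
        ⟨t, rfl, rfl⟩, ⟨t.push d, by rw [contents_push], rfl⟩⟩
    | @pop d ht =>
      have hcont := contents_eq_of_ready_eq_some ht
      refine ⟨_, _, .refl, .inl (step_infQueueSpec_name_iff.2 (.inr ⟨d, ?_, rfl, rfl⟩)),
        ⟨t, rfl, rfl⟩, ⟨t.pop, by rw [hcont, List.dropLast_concat], rfl⟩⟩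
      rw [hcont, List.getLast?_concat]
    | tau hT =>
      exact ⟨_, _, .refl, .inr ⟨rfl, rfl⟩, ⟨t, rfl, rfl⟩, ⟨t', by rw [hT.contents_eq], rfl⟩⟩
  finFwd := by
    rintro _ _ ⟨t, rfl, rfl⟩ -
    exact ⟨_, .refl, ⟨t, rfl, rfl⟩, term_toPExp t w⟩
  finBwd := by
    rintro _ _ ⟨t, rfl, rfl⟩ -
    exact ⟨_, .refl, ⟨t, rfl, rfl⟩, term_infQueueSpec_name _⟩

/-- Neither side diverges: the infinite queue has no internal steps at all, and internal steps of
shapes terminate. -/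
lemma divergencePreserving_queueRel (hw : ChannelsDistinct w) (p₁ : PExp C V B (List V))
    (p₂ : PExp C V B (C × C × C)) :
    DivergencePreserving (exprLTS (infQueueSpec C B V al w.1 w.2.1) p₁)
      (exprLTS (bkQueueSpec C B V al) p₂) (queueRel B w) := by
  constructor
  · intro _ f hf hR
    obtain ⟨t, ht, -⟩ := hR 0
    have h := hf 0
    rw [ht] at h
    rcases step_infQueueSpec_name_iff.1 h with ⟨_, _, h, -⟩ | ⟨_, _, h, -⟩ <;> cases h
  · intro _ f hf hR
    choose t ht using hR
    refine absurd (fun i => tauStep_of_step_toPExp (B := B) (al := al) hw ?_) (not_forall_tauStep t)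
    rw [← (ht i).2, ← (ht (i + 1)).2]
    exact hf i

theorem dpBranchingBisimilar_infQueueSpec_bkQueueSpec (hal : ∀ d, d ∈ al)
    (hw : ChannelsDistinct w) :
    DPBranchingBisimilar (pLTS (infQueueSpec C B V al w.1 w.2.1) (.name []))
      (pLTS (bkQueueSpec C B V al) (.name w)) :=
  DPBranchingBisimilar.comap (pLTS_isBoundedMorphism _) (pLTS_isBoundedMorphism _)
    ⟨queueRel B w, isBranchingBisimulation_queueRel hal hw _ _,
      divergencePreserving_queueRel hw _ _, ⟨.leaf, rfl, rfl⟩⟩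

end Bisimulation

/-- The infinite queue specification and the finite
Bergstra–Klop queue specification define the same behaviour up to
divergence-preserving branching bisimilarity:
`T_{E∞Q}(Q_ε) ≈Δb T_{EQ}(Q^{io}_l)`. -/
theorem infinite_queue_dpbbisim_bk_queue
    {C D B : Type} [Fintype D] (ci co cl : C)
    (hio : ci ≠ co) (hil : ci ≠ cl) (hol : co ≠ cl) :
    DPBranchingBisimilar
      (pLTS (infQueueSpec C B (Option D) (allOf (Option D)) ci co)
        (.name ([] : List (Option D))))
      (pLTS (bkQueueSpec C B (Option D) (allOf (Option D)))
        (.name (ci, co, cl))) :=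
  dpBranchingBisimilar_infQueueSpec_bkQueueSpec (w := (ci, co, cl))
    (fun d => Finset.mem_toList.2 (Finset.mem_univ d)) ⟨hio, hil, hol⟩

end RTMPaper
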